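/- For nonzero integers k, l with k ≥ 1, the map sending a matrix α = (a b; c d) in B_{k,l}^× to the class of a in (ℤ/kℤ)^× is a surjective group homomorphism onto { ā ∈ (ℤ/kℤ)^× | a² ≡ ±1 mod k }. -/

import Mathlib

/-- Membership in `B_{k,l}` (here `k` a positive natural number). -/
def Bmem (k : ℕ) (l : ℤ) (M : Matrix (Fin 2) (Fin 2) ℤ) : Prop :=
  (k : ℤ) ∣ (M 0 0 - M 1 1) ∧ (k : ℤ) ∣ M 1 0 ∧ l ∣ M 0 1

/-- Membership in `B_{k,l}^×`. -/
def BmemUnit (k : ℕ) (l : ℤ) (M : Matrix (Fin 2) (Fin 2) ℤ) : Prop :=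
  Bmem k l M ∧ (M.det = 1 ∨ M.det = -1)

/-- The map `α = (a b; c d) ↦ ā ∈ (ℤ/kℤ)^×` on `B_{k,l}^×` is a group homomorphism
(multiplicative and sending the identity to `1`), its image is contained in
`{ ā ∈ (ℤ/kℤ)^× | a² ≡ ±1 mod k }`, and it is surjective onto this set. -/
theorem stmt_2 (k : ℕ) (hk : 1 ≤ k) (l : ℤ) (hl : l ≠ 0) :
    (((1 : Matrix (Fin 2) (Fin 2) ℤ) 0 0 : ℤ) : ZMod k) = 1 ∧
    (∀ M N : Matrix (Fin 2) (Fin 2) ℤ, BmemUnit k l M → BmemUnit k l N →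
      (((M * N) 0 0 : ℤ) : ZMod k) = ((M 0 0 : ℤ) : ZMod k) * ((N 0 0 : ℤ) : ZMod k)) ∧
    (∀ M : Matrix (Fin 2) (Fin 2) ℤ, BmemUnit k l M →
      IsUnit ((M 0 0 : ℤ) : ZMod k) ∧
      (((M 0 0 : ℤ) : ZMod k) ^ 2 = 1 ∨ ((M 0 0 : ℤ) : ZMod k) ^ 2 = -1)) ∧
    (∀ a : ZMod k, IsUnit a → (a ^ 2 = 1 ∨ a ^ 2 = -1) →
      ∃ M : Matrix (Fin 2) (Fin 2) ℤ, BmemUnit k l M ∧ ((M 0 0 : ℤ) : ZMod k) = a) := by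
  refine ⟨by simp, ?_, ?_, ?_⟩
  · -- multiplicativity
    intro M N _ hN
    have h10 : ((N 1 0 : ℤ) : ZMod k) = 0 :=
      (ZMod.intCast_zmod_eq_zero_iff_dvd _ _).2 hN.1.2.1
    rw [Matrix.mul_apply, Fin.sum_univ_two]
    push_cast
    rw [h10]
    ring
  · -- image condition
    intro M hM
    obtain ⟨⟨had, hc, -⟩, hdet⟩ := hM
    have hc0 : ((M 1 0 : ℤ) : ZMod k) = 0 :=
      (ZMod.intCast_zmod_eq_zero_iff_dvd _ _).2 hc
    have hda : ((M 1 1 : ℤ) : ZMod k) = ((M 0 0 : ℤ) : ZMod k) := by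
      have := (ZMod.intCast_zmod_eq_zero_iff_dvd _ _).2 had
      push_cast at this
      linear_combination -this
    have hdet' : ((M 0 0 : ℤ) : ZMod k) * ((M 1 1 : ℤ) : ZMod k)
        = (M.det : ZMod k) := by
      rw [Matrix.det_fin_two]
      push_cast
      rw [hc0]; ring
    rcases hdet with h | h
    · rw [h] at hdet'
      push_cast at hdet'
      refine ⟨IsUnit.of_mul_eq_one _ hdet', Or.inl ?_⟩
      linear_combination hdet' - ((M 0 0 : ℤ) : ZMod k) * hda
    · rw [h] at hdet'
      push_cast at hdet'
      refine ⟨IsUnit.of_mul_eq_one (-(M 1 1 : ℤ) : ZMod k) (by rw [mul_neg, hdet']; ring),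
        Or.inr ?_⟩
      linear_combination hdet' - ((M 0 0 : ℤ) : ZMod k) * hda
  · -- surjectivity
    intro a ha hsq
    haveI : NeZero k := ⟨by omega⟩
    set L : ℕ := l.natAbs with hL
    have hLne : L ≠ 0 := Int.natAbs_ne_zero.2 hl
    set n : ℕ := k * L with hn
    haveI : NeZero n := ⟨by positivity⟩
    have hdvd : k ∣ n := ⟨L, rfl⟩
    obtain ⟨u, hu⟩ := ZMod.unitsMap_surjective hdvd ha.unit
    -- a' : integer representative, a unit mod n
    set a' : ℤ := ((u : ZMod n).val : ℤ) with ha'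
    have ha'n : ((a' : ℤ) : ZMod n) = (u : ZMod n) := by
      simp [ha', ZMod.natCast_val, ZMod.intCast_cast]
    have ha'k : ((a' : ℤ) : ZMod k) = a := by
      have := congrArg (fun x => ((x : (ZMod k)ˣ) : ZMod k)) hu
      simp only [ZMod.unitsMap_def, Units.coe_map, MonoidHom.coe_coe,
        IsUnit.unit_spec, ZMod.castHom_apply] at this
      rw [ha', Int.cast_natCast, ZMod.natCast_val, this]
    -- inverse of a' mod n
    set b : ℤ := (((u⁻¹ : (ZMod n)ˣ) : ZMod n).val : ℤ) with hb
    have hbn : ((b : ℤ) : ZMod n) = ((u⁻¹ : (ZMod n)ˣ) : ZMod n) := by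
      simp [hb, ZMod.natCast_val, ZMod.intCast_cast]
    have hinv : ((a' * b : ℤ) : ZMod n) = 1 := by
      push_cast
      rw [ha'n, hbn, u.mul_inv]
    have hinv' : (n : ℤ) ∣ a' * b - 1 := by
      rw [← ZMod.intCast_zmod_eq_zero_iff_dvd]
      push_cast at hinv ⊢
      linear_combination hinv
    -- sign
    obtain ⟨ε, hε, hsq'⟩ : ∃ ε : ℤ, (ε = 1 ∨ ε = -1) ∧ a ^ 2 = (ε : ZMod k) := by
      rcases hsq with h | h
      · exact ⟨1, Or.inl rfl, by push_cast; exact h⟩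
      · exact ⟨-1, Or.inr rfl, by push_cast; exact h⟩
    set d : ℤ := b * ε with hd
    have hnd : (n : ℤ) ∣ a' * d - ε := by
      have : a' * d - ε = ε * (a' * b - 1) := by rw [hd]; ring
      rw [this]
      exact Dvd.dvd.mul_left hinv' ε
    obtain ⟨s, hs⟩ : ∃ s : ℤ, a' * d - ε = (k : ℤ) * L * s := by
      obtain ⟨s, hs⟩ := hnd
      exact ⟨s, by rw [hs, hn]; push_cast; ring⟩
    refine ⟨!![a', (L : ℤ) * s; (k : ℤ), d], ⟨⟨?_, ?_, ?_⟩, ?_⟩, ?_⟩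
    · -- k ∣ a' - d
      show (k : ℤ) ∣ a' - d
      rw [← ZMod.intCast_zmod_eq_zero_iff_dvd]
      have h1 : ((a' * d : ℤ) : ZMod k) = (ε : ZMod k) := by
        have : (k : ℤ) ∣ a' * d - ε := dvd_trans (by exact_mod_cast Dvd.intro L rfl) hnd
        have h2 := (ZMod.intCast_zmod_eq_zero_iff_dvd _ _).2 this
        push_cast at h2 ⊢
        linear_combination h2
      have h3 : ((a' : ℤ) : ZMod k) * (((a' : ℤ) : ZMod k) - ((d : ℤ) : ZMod k)) = 0 := by
        have h4 : ((a' : ℤ) : ZMod k) * ((a' : ℤ) : ZMod k) = (ε : ZMod k) := by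
          rw [ha'k, ← sq, hsq']
        push_cast at h1
        linear_combination h4 - h1
      have h5 := (ha'k ▸ ha : IsUnit ((a' : ℤ) : ZMod k))
      have := h5.mul_right_eq_zero.mp h3
      push_cast at this ⊢
      linear_combination this
    · -- k ∣ c
      show (k : ℤ) ∣ (k : ℤ)
      exact dvd_rfl
    · -- l ∣ b entry
      show l ∣ (L : ℤ) * s
      exact Dvd.dvd.mul_right (Int.dvd_natAbs.2 dvd_rfl) s
    · -- det
      rw [Matrix.det_fin_two_of]
      rcases hε with h | h
      · left; rw [← h]; linear_combination hs
      · right; rw [← h]; linear_combination hs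
    · exact ha'k
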